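/- Let (T, φ) be a quasi-Sturmian coloring. If for some n > N₀ the factor graph G_n contains two distinct vertices each of degree at least three, then the coloring is of bounded type. -/

import Mathlib

open SimpleGraph

variable {V A : Type*}

/-- Equivalence of colored `n`-balls: a color-preserving isometry between the balls
of radius `n` centered at `u` and `v`, sending `u` to `v`. -/
def BallEquiv (G : SimpleGraph V) (φ : V → A) (n : ℕ) (u v : V) : Prop :=
  ∃ f : V → V, f u = v ∧
    (∀ x y : V, G.dist u x ≤ n → G.dist u y ≤ n → G.dist (f x) (f y) = G.dist x y) ∧
    (∀ x : V, G.dist u x ≤ n → φ (f x) = φ x) ∧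
    (∀ z : V, G.dist v z ≤ n → ∃ x : V, G.dist u x ≤ n ∧ f x = z)

/-- The factor complexity `b(n)`: the number of classes of colored `n`-balls. -/
noncomputable def complexity (G : SimpleGraph V) (φ : V → A) (n : ℕ) : ℕ :=
  Nat.card (Quot (BallEquiv G φ n))

/-- The colored `n`-ball at `u` is special: it admits two inequivalent `(n+1)`-extensions. -/
def IsSpecialCenter (G : SimpleGraph V) (φ : V → A) (n : ℕ) (u : V) : Prop :=
  ∃ v, BallEquiv G φ n u v ∧ ¬ BallEquiv G φ (n+1) u v

/-- The type set `Λ_u` of a vertex. -/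
def typeSet (G : SimpleGraph V) (φ : V → A) (u : V) : Set ℕ :=
  {n | IsSpecialCenter G φ n u}

/-- Two vertices are in the same class: their colored `n`-balls agree for all `n`. -/
def SameClass (G : SimpleGraph V) (φ : V → A) (u v : V) : Prop :=
  ∀ n, BallEquiv G φ n u v

/-- `m` is the maximal type of `u`. -/
def MaxType (G : SimpleGraph V) (φ : V → A) (u : V) (m : ℕ) : Prop :=
  m ∈ typeSet G φ u ∧ ∀ k ∈ typeSet G φ u, k ≤ m

/-- Weak adjacency of classes of colored `n`-balls (given by representatives `x`, `y`). -/
def WeakAdj (G : SimpleGraph V) (φ : V → A) (n : ℕ) (x y : V) : Prop :=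
  ∃ v w, G.Adj v w ∧ BallEquiv G φ n x v ∧ BallEquiv G φ n y w

/-- Strong adjacency: every ball of the class of `x` has a neighboring ball of the class of `y`. -/
def StrongAdj (G : SimpleGraph V) (φ : V → A) (n : ℕ) (x y : V) : Prop :=
  ∀ v, BallEquiv G φ n x v → ∃ w, G.Adj v w ∧ BallEquiv G φ n y w

/-- The factor graph `𝒢ₙ` on classes of colored `n`-balls. -/
def FactorGraph (G : SimpleGraph V) (φ : V → A) (n : ℕ) :
    SimpleGraph (Quot (BallEquiv G φ n)) where
  Adj a b := a ≠ b ∧ ∃ u v, G.Adj u v ∧ Quot.mk _ u = a ∧ Quot.mk _ v = b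
  symm := ⟨by rintro a b ⟨hne, u, v, h, hu, hv⟩; exact ⟨hne.symm, v, u, h.symm, hv, hu⟩⟩
  loopless := ⟨by rintro a ⟨hne, _⟩; exact hne rfl⟩

/-- The quotient graph `X = Γ\T` on classes of vertices. -/
def QuotGraph (G : SimpleGraph V) (φ : V → A) :
    SimpleGraph (Quot (SameClass G φ)) where
  Adj a b := a ≠ b ∧ ∃ u v, G.Adj u v ∧ Quot.mk _ u = a ∧ Quot.mk _ v = b
  symm := ⟨by rintro a b ⟨hne, u, v, h, hu, hv⟩; exact ⟨hne.symm, v, u, h.symm, hv, hu⟩⟩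
  loopless := ⟨by rintro a ⟨hne, _⟩; exact hne rfl⟩


/-!
If the coloring were of unbounded type, every type set would be infinite, since finiteness of
the type set passes from a vertex to its neighbours. Let `x` be a vertex whose class has three
neighbouring classes in `𝒢ₙ`. If `x` were not special at level `n`, those classes would be
realised by neighbours `t₁, t₂, t₃` of `x` itself. For a large type `k + 1` of `x`, each `tᵢ`
is special at level `k`, `k + 1` or `k + 2`. Level `k + 1` is excluded, because there the
special ball is that of `x`. So two of the `tᵢ` are special at the same level, and by
uniqueness of the special ball they are `n`-equivalent, which is a contradiction. Hence both
`x` and `y` are special at level `n`, so again by uniqueness their `n`-balls are equivalent.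
-/

open Filter

lemma Set.Infinite.frequently_add_mem {s : Set ℕ} (hs : s.Infinite) (j : ℕ) :
    ∃ᶠ k in atTop, k + j ∈ s := by
  have hfreq : ∃ᶠ m in atTop, m ∈ s := Nat.frequently_atTop_iff_infinite.mpr hs
  rwa [← map_add_atTop_eq_nat j, frequently_map] at hfreq

lemma Nat.card_add_two_le_of_surjective {α β : Type*} [Finite α] {π : α → β}
    (hπ : Function.Surjective π) {a a' b b' : α} (ha : a ≠ a') (hπa : π a = π a')
    (hb : b ≠ b') (hπb : π b = π b') (hab : π a ≠ π b) :
    Nat.card β + 2 ≤ Nat.card α := by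
  classical
  have : Fintype α := Fintype.ofFinite α
  have : Fintype β := Fintype.ofSurjective π hπ
  have ha'b' : a' ≠ b' := fun h => hab (by rw [hπa, hπb, h])
  have hab' : a ≠ b' := fun h => hab (by rw [h, hπb])
  have hba' : b ≠ a' := fun h => hab (by rw [h, hπa])
  have hsurj : Set.SurjOn π ↑(Finset.univ \ {a', b'}) ↑(Finset.univ : Finset β) := by
    intro q _
    obtain ⟨z, rfl⟩ := hπ q
    by_cases hza : z = a'
    · exact ⟨a, by simp [ha, hab'], by rw [hza, hπa]⟩
    by_cases hzb : z = b'
    · exact ⟨b, by simp [hb, hba'], by rw [hzb, hπb]⟩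
    exact ⟨z, by simp [hza, hzb], rfl⟩
  have hcard := Finset.card_le_card_of_surjOn π hsurj
  rw [Finset.card_sdiff_of_subset (Finset.subset_univ _), Finset.card_pair ha'b',
    Finset.card_univ, Finset.card_univ] at hcard
  rw [Nat.card_eq_fintype_card, Nat.card_eq_fintype_card]
  have : 2 ≤ Fintype.card α := by
    rw [← Finset.card_pair ha'b']
    exact Finset.card_le_univ _
  omega

namespace BallEquiv

variable {G : SimpleGraph V} {φ : V → A} {n k : ℕ} {u v w : V}

lemma dist_map_center {f : V → V} (hfu : f u = v)
    (hdist : ∀ x y, G.dist u x ≤ n → G.dist u y ≤ n → G.dist (f x) (f y) = G.dist x y)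
    {x : V} (hx : G.dist u x ≤ n) : G.dist v (f x) = G.dist u x := by
  rw [← hfu]
  exact hdist u x (by simp) hx

protected lemma refl (G : SimpleGraph V) (φ : V → A) (n : ℕ) (u : V) : BallEquiv G φ n u u :=
  ⟨id, rfl, fun _ _ _ _ => rfl, fun _ _ => rfl, fun z hz => ⟨z, hz, rfl⟩⟩

lemma mono (h : BallEquiv G φ n u v) (hkn : k ≤ n) : BallEquiv G φ k u v := by
  obtain ⟨f, hfu, hdist, hcol, hsurj⟩ := h
  refine ⟨f, hfu, fun x y hx hy => hdist x y (hx.trans hkn) (hy.trans hkn),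
    fun x hx => hcol x (hx.trans hkn), fun z hz => ?_⟩
  obtain ⟨x, hx, rfl⟩ := hsurj z (hz.trans hkn)
  exact ⟨x, (dist_map_center hfu hdist hx).symm.trans_le hz, rfl⟩

protected lemma symm (h : BallEquiv G φ n u v) (hconn : G.Connected) : BallEquiv G φ n v u := by
  obtain ⟨f, hfu, hdist, hcol, hsurj⟩ := h
  have hinj : Set.InjOn f {x | G.dist u x ≤ n} := fun x hx y hy hxy => by
    have h0 := hdist x y hx hy
    rw [hxy, SimpleGraph.dist_self] at h0
    exact hconn.dist_eq_zero_iff.mp h0.symm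
  have : Nonempty V := ⟨u⟩
  set g := Function.invFunOn f {x | G.dist u x ≤ n}
  have hg : ∀ z, G.dist v z ≤ n → G.dist u (g z) ≤ n ∧ f (g z) = z := fun z hz =>
    let ⟨x, hx, hfx⟩ := hsurj z hz
    Function.invFunOn_pos (s := {x | G.dist u x ≤ n}) ⟨x, hx, hfx⟩
  refine ⟨g, ?_, fun x y hx hy => ?_, fun x hx => ?_, fun x hx => ?_⟩
  · exact hinj (hg v (by simp)).1 (by simp) ((hg v (by simp)).2.trans hfu.symm)
  · rw [← hdist _ _ (hg x hx).1 (hg y hy).1, (hg x hx).2, (hg y hy).2]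
  · rw [← hcol _ (hg x hx).1, (hg x hx).2]
  · have hfx : G.dist v (f x) ≤ n := (dist_map_center hfu hdist hx).trans_le hx
    exact ⟨f x, hfx, hinj (hg _ hfx).1 hx (hg _ hfx).2⟩

protected lemma trans (h₁ : BallEquiv G φ n u v) (h₂ : BallEquiv G φ n v w) :
    BallEquiv G φ n u w := by
  obtain ⟨f, hfu, hdf, hcf, hsf⟩ := h₁
  obtain ⟨g, hgv, hdg, hcg, hsg⟩ := h₂
  have hball : ∀ x, G.dist u x ≤ n → G.dist v (f x) ≤ n := fun x hx =>
    (dist_map_center hfu hdf hx).trans_le hx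
  refine ⟨g ∘ f, by simp [hfu, hgv], fun x y hx hy => ?_, fun x hx => ?_, fun z hz => ?_⟩
  · simp only [Function.comp_apply, hdg _ _ (hball x hx) (hball y hy), hdf x y hx hy]
  · simp only [Function.comp_apply, hcg _ (hball x hx), hcf x hx]
  · obtain ⟨y, hy, rfl⟩ := hsg z hz
    obtain ⟨x, hx, rfl⟩ := hsf y hy
    exact ⟨x, hx, rfl⟩

lemma quot_mk_eq_iff (hconn : G.Connected) :
    Quot.mk (BallEquiv G φ n) u = Quot.mk _ v ↔ BallEquiv G φ n u v := by
  rw [Quot.eq]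
  exact Equivalence.eqvGen_iff ⟨BallEquiv.refl G φ n, (·.symm hconn), BallEquiv.trans⟩

lemma exists_adj_of_adj (hconn : G.Connected) (h : BallEquiv G φ (k + 1) u v) {t : V}
    (ht : G.Adj u t) : ∃ t', G.Adj v t' ∧ BallEquiv G φ k t t' := by
  obtain ⟨f, hfu, hdist, hcol, hsurj⟩ := h
  have hut : G.dist u t = 1 := dist_eq_one_iff_adj.mpr ht
  have hball : ∀ x, G.dist t x ≤ k → G.dist u x ≤ k + 1 := fun x hx =>
    (hconn.dist_triangle (v := t)).trans (by omega)
  have hvt : G.dist v (f t) = 1 := (dist_map_center hfu hdist (by omega)).trans hut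
  refine ⟨f t, dist_eq_one_iff_adj.mp hvt, f, rfl,
    fun x y hx hy => hdist x y (hball x hx) (hball y hy), fun x hx => hcol x (hball x hx),
    fun z hz => ?_⟩
  obtain ⟨x, hx, rfl⟩ := hsurj z ((hconn.dist_triangle (v := f t)).trans (by omega))
  exact ⟨x, (hdist t x (by omega) hx).symm.trans_le hz, rfl⟩

lemma succ_of_not_isSpecialCenter (h : BallEquiv G φ n u v)
    (hu : ¬ IsSpecialCenter G φ n u) : BallEquiv G φ (n + 1) u v :=
  by_contra fun h' => hu ⟨v, h, h'⟩

end BallEquiv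

section Coloring

variable {G : SimpleGraph V} {φ : V → A} {n k N₀ c : ℕ} {u w x : V}

lemma WeakAdj.exists_adj_of_not_isSpecialCenter (hconn : G.Connected) {a : V}
    (h : WeakAdj G φ n x a) (hx : ¬ IsSpecialCenter G φ n x) :
    ∃ t, G.Adj x t ∧ BallEquiv G φ n t a := by
  obtain ⟨v, w, hvw, hxv, haw⟩ := h
  obtain ⟨t, hxt, hwt⟩ :=
    ((hxv.succ_of_not_isSpecialCenter hx).symm hconn).exists_adj_of_adj hconn hvw
  exact ⟨t, hxt, (hwt.symm hconn).trans (haw.symm hconn)⟩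

lemma ballEquiv_of_isSpecialCenter_of_complexity_succ (hconn : G.Connected)
    (hcard : complexity G φ (k + 1) = complexity G φ k + 1) {u v : V}
    (hu : IsSpecialCenter G φ k u) (hv : IsSpecialCenter G φ k v) : BallEquiv G φ k u v := by
  by_contra huv
  obtain ⟨u', hu, hu'⟩ := hu
  obtain ⟨v', hv, hv'⟩ := hv
  unfold complexity at hcard
  have : Finite (Quot (BallEquiv G φ (k + 1))) := Nat.finite_of_card_ne_zero (by omega)
  let π : Quot (BallEquiv G φ (k + 1)) → Quot (BallEquiv G φ k) :=
    Quot.map id fun _ _ h => h.mono k.le_succ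
  have hπ : Function.Surjective π := Quot.ind fun a => ⟨Quot.mk _ a, rfl⟩
  have := Nat.card_add_two_le_of_surjective hπ
    (a := Quot.mk _ u) (a' := Quot.mk _ u') (b := Quot.mk _ v) (b' := Quot.mk _ v')
    (mt (BallEquiv.quot_mk_eq_iff hconn).mp hu') (Quot.sound hu)
    (mt (BallEquiv.quot_mk_eq_iff hconn).mp hv') (Quot.sound hv)
    (mt (BallEquiv.quot_mk_eq_iff hconn).mp huv)
  omega

lemma ballEquiv_of_isSpecialCenter (hconn : G.Connected)
    (hQS : ∀ m, N₀ ≤ m → complexity G φ m = m + c) (hk : N₀ ≤ k) {u v : V}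
    (hu : IsSpecialCenter G φ k u) (hv : IsSpecialCenter G φ k v) : BallEquiv G φ k u v :=
  ballEquiv_of_isSpecialCenter_of_complexity_succ hconn
    (by rw [hQS k hk, hQS (k + 1) (by omega)]; ring) hu hv

variable (G φ) in
def NeighborBallsStable (u : V) (m : ℕ) : Prop :=
  ∀ a b, G.Adj u a → G.Adj u b → BallEquiv G φ m a b → BallEquiv G φ (m + 1) a b

variable (G φ) in
lemma eventually_ballEquiv_succ (a b : V) :
    ∀ᶠ m in atTop, BallEquiv G φ m a b → BallEquiv G φ (m + 1) a b := by
  by_cases h : ∀ m, BallEquiv G φ m a b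
  · exact .of_forall fun m _ => h (m + 1)
  push Not at h
  obtain ⟨K, hK⟩ := h
  filter_upwards [eventually_ge_atTop K] with m hm hab using absurd (hab.mono hm) hK

variable (G φ) in
lemma eventually_neighborBallsStable [G.LocallyFinite] (u : V) :
    ∀ᶠ m in atTop, NeighborBallsStable G φ u m := by
  have hfin : (G.neighborSet u).Finite := (G.neighborSet u).toFinite
  filter_upwards [hfin.eventually_all.2 fun a _ =>
    hfin.eventually_all.2 fun b _ => eventually_ballEquiv_succ G φ a b] with m hm a b ha hb
  exact hm a ha b hb

/-- If `u` were non-special at the three levels, the `(k + 3)`-ball of `u` would carry the two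
inequivalent `(k + 2)`-extensions of the special ball at `w` to two neighbours of `u` that are
`(k + 1)`- but not `(k + 2)`-equivalent. -/
lemma isSpecialCenter_of_adj_isSpecialCenter (hconn : G.Connected) (hwu : G.Adj w u)
    (hw : IsSpecialCenter G φ (k + 1) w) (hstab : NeighborBallsStable G φ u (k + 1)) :
    IsSpecialCenter G φ k u ∨ IsSpecialCenter G φ (k + 1) u ∨ IsSpecialCenter G φ (k + 2) u := by
  by_contra! hns
  obtain ⟨h₀, h₁, h₂⟩ := hns
  obtain ⟨z, hwz, hwz'⟩ := hw
  obtain ⟨u', hzu', huu'⟩ := hwz.exists_adj_of_adj hconn hwu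
  have huu'₁ := huu'.succ_of_not_isSpecialCenter h₀
  have huu'₂ := huu'₁.succ_of_not_isSpecialCenter h₁
  have huu'₃ := huu'₂.succ_of_not_isSpecialCenter h₂
  obtain ⟨w', huw', hzw'⟩ := (huu'₃.symm hconn).exists_adj_of_adj hconn hzu'.symm
  have hww' : BallEquiv G φ (k + 1) w w' := hwz.trans (hzw'.mono (by omega))
  exact hwz' ((hstab w w' hwu.symm huw' hww').trans (hzw'.symm hconn))

lemma finite_typeSet_of_adj [G.LocallyFinite] (hconn : G.Connected) (huw : G.Adj u w)
    (hu : (typeSet G φ u).Finite) : (typeSet G φ w).Finite := by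
  by_contra hw
  have hu₀ : ∀ᶠ m in atTop, m ∉ typeSet G φ u :=
    Nat.cofinite_eq_atTop ▸ hu.eventually_cofinite_notMem
  obtain ⟨k, hk, h₀, h₁, h₂, hstab⟩ := ((Set.Infinite.frequently_add_mem hw 1).and_eventually
    (hu₀.and (((tendsto_add_atTop_nat 1).eventually hu₀).and
      (((tendsto_add_atTop_nat 2).eventually hu₀).and
        ((tendsto_add_atTop_nat 1).eventually (eventually_neighborBallsStable G φ u)))))).exists
  rcases isSpecialCenter_of_adj_isSpecialCenter hconn huw.symm hk hstab with h | h | h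
  exacts [h₀ h, h₁ h, h₂ h]

lemma finite_typeSet_of_reachable [G.LocallyFinite] (hconn : G.Connected)
    (huw : G.Reachable u w) (hu : (typeSet G φ u).Finite) : (typeSet G φ w).Finite := by
  obtain ⟨p⟩ := huw
  induction p with
  | nil => exact hu
  | cons h _ ih => exact ih (finite_typeSet_of_adj hconn h hu)

lemma ballEquiv_of_three_adj [G.LocallyFinite] (hconn : G.Connected)
    (hQS : ∀ m, N₀ ≤ m → complexity G φ m = m + c) (hx : (typeSet G φ x).Infinite)
    {t₁ t₂ t₃ : V} (ht₁ : G.Adj x t₁) (ht₂ : G.Adj x t₂) (ht₃ : G.Adj x t₃)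
    (hx₁ : ¬ BallEquiv G φ n x t₁) (hx₂ : ¬ BallEquiv G φ n x t₂)
    (hx₃ : ¬ BallEquiv G φ n x t₃) :
    BallEquiv G φ n t₁ t₂ ∨ BallEquiv G φ n t₁ t₃ ∨ BallEquiv G φ n t₂ t₃ := by
  have hstab (t : V) := (tendsto_add_atTop_nat 1).eventually (eventually_neighborBallsStable G φ t)
  obtain ⟨k, hk, hkn, hkN, hs₁, hs₂, hs₃⟩ := ((hx.frequently_add_mem 1).and_eventually
    ((eventually_ge_atTop n).and ((eventually_ge_atTop N₀).and
      ((hstab t₁).and ((hstab t₂).and (hstab t₃)))))).exists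
  have hlevel : ∀ t, G.Adj x t → ¬ BallEquiv G φ n x t → NeighborBallsStable G φ t (k + 1) →
      IsSpecialCenter G φ k t ∨ IsSpecialCenter G φ (k + 2) t := by
    intro t hxt hnt hst
    rcases isSpecialCenter_of_adj_isSpecialCenter hconn hxt hk hst with h | h | h
    · exact .inl h
    · exact absurd ((ballEquiv_of_isSpecialCenter hconn hQS (by omega) hk h).mono (by omega)) hnt
    · exact .inr h
  have hsame : ∀ {j s t}, k ≤ j → IsSpecialCenter G φ j s → IsSpecialCenter G φ j t →
      BallEquiv G φ n s t := fun hj hs ht =>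
    (ballEquiv_of_isSpecialCenter hconn hQS (by omega) hs ht).mono (by omega)
  rcases hlevel t₁ ht₁ hx₁ hs₁ with h₁ | h₁ <;> rcases hlevel t₂ ht₂ hx₂ hs₂ with h₂ | h₂ <;>
    rcases hlevel t₃ ht₃ hx₃ hs₃ with h₃ | h₃
  all_goals first
    | exact .inl (hsame (by omega) h₁ h₂)
    | exact .inr (.inl (hsame (by omega) h₁ h₃))
    | exact .inr (.inr (hsame (by omega) h₂ h₃))

variable (G φ) in
def HasThreeNeighborClasses (n : ℕ) (x : V) : Prop :=
  ∃ a b e : V, WeakAdj G φ n x a ∧ WeakAdj G φ n x b ∧ WeakAdj G φ n x e ∧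
    ¬ BallEquiv G φ n a b ∧ ¬ BallEquiv G φ n a e ∧ ¬ BallEquiv G φ n b e ∧
    ¬ BallEquiv G φ n x a ∧ ¬ BallEquiv G φ n x b ∧ ¬ BallEquiv G φ n x e

lemma isSpecialCenter_of_hasThreeNeighborClasses [G.LocallyFinite] (hconn : G.Connected)
    (hQS : ∀ m, N₀ ≤ m → complexity G φ m = m + c) (hx : (typeSet G φ x).Infinite)
    (h : HasThreeNeighborClasses G φ n x) : IsSpecialCenter G φ n x := by
  by_contra hns
  obtain ⟨a, b, e, hxa, hxb, hxe, hab, hae, hbe, hna, hnb, hne⟩ := h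
  obtain ⟨t₁, ht₁, hta⟩ := hxa.exists_adj_of_not_isSpecialCenter hconn hns
  obtain ⟨t₂, ht₂, htb⟩ := hxb.exists_adj_of_not_isSpecialCenter hconn hns
  obtain ⟨t₃, ht₃, hte⟩ := hxe.exists_adj_of_not_isSpecialCenter hconn hns
  rcases ballEquiv_of_three_adj hconn hQS hx ht₁ ht₂ ht₃
      (fun h => hna (h.trans hta)) (fun h => hnb (h.trans htb)) (fun h => hne (h.trans hte))
    with h | h | h
  · exact hab (((hta.symm hconn).trans h).trans htb)
  · exact hae (((hta.symm hconn).trans h).trans hte)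
  · exact hbe (((htb.symm hconn).trans h).trans hte)

end Coloring

theorem two_degree_three_implies_bounded_type {V A : Type*} (G : SimpleGraph V)
    [G.LocallyFinite] (φ : V → A)
    (htree : G.IsTree)
    (N₀ c : ℕ) (hQS : ∀ m, N₀ ≤ m → complexity G φ m = m + c)
    (n : ℕ) (hn : N₀ < n)
    (x y : V) (hxy : ¬ BallEquiv G φ n x y)
    (hx : ∃ a b e : V, WeakAdj G φ n x a ∧ WeakAdj G φ n x b ∧ WeakAdj G φ n x e ∧
      ¬ BallEquiv G φ n a b ∧ ¬ BallEquiv G φ n a e ∧ ¬ BallEquiv G φ n b e ∧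
      ¬ BallEquiv G φ n x a ∧ ¬ BallEquiv G φ n x b ∧ ¬ BallEquiv G φ n x e)
    (hy : ∃ a b e : V, WeakAdj G φ n y a ∧ WeakAdj G φ n y b ∧ WeakAdj G φ n y e ∧
      ¬ BallEquiv G φ n a b ∧ ¬ BallEquiv G φ n a e ∧ ¬ BallEquiv G φ n b e ∧
      ¬ BallEquiv G φ n y a ∧ ¬ BallEquiv G φ n y b ∧ ¬ BallEquiv G φ n y e) :
    ∀ u : V, (typeSet G φ u).Finite := by
  intro u
  by_contra hu
  have hconn : G.Connected := htree.connected
  have hinf (v : V) : (typeSet G φ v).Infinite := fun hv =>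
    hu (finite_typeSet_of_reachable hconn (hconn.preconnected v u) hv)
  exact hxy (ballEquiv_of_isSpecialCenter hconn hQS hn.le
    (isSpecialCenter_of_hasThreeNeighborClasses hconn hQS (hinf x) hx)
    (isSpecialCenter_of_hasThreeNeighborClasses hconn hQS (hinf y) hy))
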